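/- arXiv:1811.08714 — 2 statements merged into one kernel-verified Lean document; each statement's English description precedes it below -/
import Mathlib

section
/- Let G ⊆ ℝ³ be split by a C² interface Σ = ∂G₋ into G₊ and G₋ with unit normal ν (outer for G₋'s complement orientation as in the text). Suppose (E,H,D,B) ∈ C(J̄, ℋ¹(G)) ∩ C¹(J̄, L²(G)) solves ∂_t B_± = -curl E_± on G_± and the tangential traces satisfy [E × ν] = 0 on J × Σ. If the normal jump satisfies [B·ν](t₀) = 0 on Σ, then [B·ν](t) = 0 on Σ for all t ∈ J. -/
/-!
Since `∂ₜ[B·ν] = -[curl E]·ν`, it suffices that `curl u · ∇φ = 0` on `Σ = {φ = 0}` whenever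
`u × ∇φ = 0` on `Σ` (here `u = [E]`). Pointwise: `w = u × ∇φ` vanishes on `Σ`, so by Lagrange
multipliers `∂ⱼw = (∂ⱼφ) c` for some vector `c`. As `u ∥ ∇φ` on `Σ`, each `∂ⱼw` is orthogonal to
`∇φ`, whence `c · ∇φ = 0`; and `div w = curl u · ∇φ - u · curl ∇φ = curl u · ∇φ` (the Hessian is
symmetric), while `div w = c · ∇φ`.
-/

open Matrix

noncomputable section

/-- `j`-th partial derivative of a vector field `u : ℝ³ → ℝ³`. -/
def pderiv3 (u : (Fin 3 → ℝ) → (Fin 3 → ℝ)) (j : Fin 3) (x : Fin 3 → ℝ) : Fin 3 → ℝ :=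
  fderiv ℝ u x (Pi.single j 1)

/-- The curl of a vector field `u : ℝ³ → ℝ³`. -/
def curl3 (u : (Fin 3 → ℝ) → (Fin 3 → ℝ)) (x : Fin 3 → ℝ) : Fin 3 → ℝ :=
  ![pderiv3 u 1 x 2 - pderiv3 u 2 x 1,
    pderiv3 u 2 x 0 - pderiv3 u 0 x 2,
    pderiv3 u 0 x 1 - pderiv3 u 1 x 0]

/-- The gradient of a scalar function on `ℝ³`. -/
def grad3 (φ : (Fin 3 → ℝ) → ℝ) (x : Fin 3 → ℝ) : Fin 3 → ℝ :=
  fun i => fderiv ℝ φ x (Pi.single i 1)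

/-- The Euclidean norm on `ℝ³`. -/
def enorm3 (v : Fin 3 → ℝ) : ℝ := Real.sqrt (∑ i, v i ^ 2)

/-- The unit normal `ν = ∇φ / |∇φ|` of the interface `Σ = {φ = 0}`. -/
def unitNormal (φ : (Fin 3 → ℝ) → ℝ) (x : Fin 3 → ℝ) : Fin 3 → ℝ :=
  (enorm3 (grad3 φ x))⁻¹ • grad3 φ x

-- `a j = ∂ⱼu`, `h j = ∂ⱼ∇φ`, `n = ∇φ`; `hw` says `∂ⱼ(u × ∇φ) = nⱼ c`.
theorem curl_dot_eq_zero_of_deriv_cross_eq_smul {a h : Fin 3 → Fin 3 → ℝ} {u n c : Fin 3 → ℝ}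
    (hn : n ≠ 0) (hun : u ⨯₃ n = 0) (hh : ∀ i j, h i j = h j i)
    (hw : ∀ j, a j ⨯₃ n + u ⨯₃ h j = n j • c) :
    ![a 1 2 - a 2 1, a 2 0 - a 0 2, a 0 1 - a 1 0] ⬝ᵥ n = 0 := by
  have hcn : c ⬝ᵥ n = 0 := by
    obtain ⟨j, hj⟩ := Function.ne_iff.1 hn
    have hnormal : (n j • c) ⬝ᵥ n = 0 := by
      rw [← hw j, add_dotProduct, dotProduct_comm, dot_cross_self, dotProduct_comm,
        triple_product_permutation, triple_product_permutation, ← cross_anticomm, hun, neg_zero,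
        dotProduct_zero, add_zero]
    rw [smul_dotProduct, smul_eq_mul] at hnormal
    exact (mul_eq_zero.1 hnormal).resolve_left hj
  have htrace : ∀ j, (a j ⨯₃ n + u ⨯₃ h j) j = n j * c j := fun j => by
    rw [hw j, Pi.smul_apply, smul_eq_mul]
  have h0 := htrace 0
  have h1 := htrace 1
  have h2 := htrace 2
  simp only [Pi.add_apply, cross_apply, Matrix.cons_val] at h0 h1 h2
  simp only [dotProduct, Fin.sum_univ_three, Matrix.cons_val] at hcn ⊢
  linear_combination h0 + h1 + h2 + hcn + u 0 * hh 1 2 + u 1 * hh 2 0 + u 2 * hh 0 1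

section LevelSet

variable {E : Type*} [NormedAddCommGroup E] [NormedSpace ℝ E] [CompleteSpace E]
  {φ : E → ℝ} {φ' : E →L[ℝ] ℝ} {z : E}

theorem exists_eq_smul_of_eq_zero_on_zeroSet {ψ : E → ℝ} {ψ' : E →L[ℝ] ℝ}
    (hψ : HasStrictFDerivAt ψ ψ' z) (hφ : HasStrictFDerivAt φ φ' z) (hφ' : φ' ≠ 0)
    (hz : φ z = 0) (hψ0 : ∀ x, φ x = 0 → ψ x = 0) : ∃ c : ℝ, ψ' = c • φ' := by
  have hextr : IsLocalExtrOn ψ {x | φ x = φ z} z :=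
    .inl <| eventually_nhdsWithin_of_forall fun x (hx : φ x = φ z) => by
      rw [hψ0 z hz, hψ0 x (hx.trans hz)]
  obtain ⟨a, b, hab, hsum⟩ := hextr.exists_multipliers_of_hasStrictFDerivAt_1d hφ hψ
  have hb : b ≠ 0 := by
    rintro rfl
    rw [zero_smul, add_zero, smul_eq_zero] at hsum
    exact hab (Prod.ext (hsum.resolve_right hφ') rfl)
  refine ⟨-(a / b), ?_⟩
  rw [← smul_right_inj hb, smul_smul, eq_neg_of_add_eq_zero_right hsum, mul_neg,
    mul_div_cancel₀ a hb]
  exact (neg_smul a φ').symm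

theorem exists_apply_eq_smul_of_eq_zero_on_zeroSet {ι : Type*} [Fintype ι]
    {w : E → ι → ℝ} {w' : E →L[ℝ] ι → ℝ}
    (hw : HasStrictFDerivAt w w' z) (hφ : HasStrictFDerivAt φ φ' z) (hφ' : φ' ≠ 0)
    (hz : φ z = 0) (hw0 : ∀ x, φ x = 0 → w x = 0) : ∃ c : ι → ℝ, ∀ v, w' v = φ' v • c := by
  have hcomp (i : ι) : ∃ c : ℝ, (ContinuousLinearMap.proj i).comp w' = c • φ' :=
    exists_eq_smul_of_eq_zero_on_zeroSet
      ((ContinuousLinearMap.proj i).hasStrictFDerivAt.comp z hw) hφ hφ' hz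
      fun x hx => congrFun (hw0 x hx) i
  choose c hc using hcomp
  exact ⟨c, fun v => funext fun i => by
    simpa [mul_comm] using congrArg (fun L : E →L[ℝ] ℝ => L v) (hc i)⟩

end LevelSet

theorem HasStrictFDerivAt.cross {E : Type*} [NormedAddCommGroup E] [NormedSpace ℝ E]
    {u g : E → Fin 3 → ℝ} {u' g' : E →L[ℝ] Fin 3 → ℝ} {z : E}
    (hu : HasStrictFDerivAt u u' z) (hg : HasStrictFDerivAt g g' z) :
    ∃ w' : E →L[ℝ] Fin 3 → ℝ, HasStrictFDerivAt (fun x => u x ⨯₃ g x) w' z ∧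
      ∀ v, w' v = u' v ⨯₃ g z + u z ⨯₃ g' v :=
  ⟨_, (crossProduct : (Fin 3 → ℝ) →ₗ[ℝ] _ →ₗ[ℝ] _).toContinuousBilinearMap
      |>.hasStrictFDerivAt_of_bilinear hu hg, fun v => by simp [add_comm]⟩

theorem curl3_dot_grad3_eq_zero_of_cross_eq_zero {φ : (Fin 3 → ℝ) → ℝ}
    {u : (Fin 3 → ℝ) → Fin 3 → ℝ} {z : Fin 3 → ℝ} (hφ : ContDiffAt ℝ 2 φ z)
    (hu : ContDiffAt ℝ 1 u z) (hz : φ z = 0)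
    (hg : grad3 φ z ≠ 0) (hcross : ∀ x, φ x = 0 → u x ⨯₃ grad3 φ x = 0) :
    curl3 u z ⬝ᵥ grad3 φ z = 0 := by
  let P : ((Fin 3 → ℝ) →L[ℝ] ℝ) →L[ℝ] Fin 3 → ℝ :=
    ContinuousLinearMap.pi fun i => ContinuousLinearMap.apply ℝ ℝ (Pi.single i 1)
  have hφ' : HasStrictFDerivAt φ (fderiv ℝ φ z) z := hφ.hasStrictFDerivAt two_ne_zero
  have hgrad : HasStrictFDerivAt (grad3 φ) (P.comp (fderiv ℝ (fderiv ℝ φ) z)) z :=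
    P.hasStrictFDerivAt.comp z ((hφ.fderiv_right_succ (n := 1)).hasStrictFDerivAt one_ne_zero)
  obtain ⟨w', hw', hw'_apply⟩ := (hu.hasStrictFDerivAt one_ne_zero).cross hgrad
  have hφ'0 : fderiv ℝ φ z ≠ 0 := fun h => hg (funext fun i => by simp [grad3, h])
  obtain ⟨c, hc⟩ := exists_apply_eq_smul_of_eq_zero_on_zeroSet hw' hφ' hφ'0 hz hcross
  have hsymm := hφ.isSymmSndFDerivAt (by simp)
  exact curl_dot_eq_zero_of_deriv_cross_eq_smul (a := fun j => pderiv3 u j z)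
    (h := fun j => P.comp (fderiv ℝ (fderiv ℝ φ) z) (Pi.single j 1)) (c := c) hg (hcross z hz)
    (fun i j => hsymm _ _) fun j => (hw'_apply _).symm.trans (hc _)

theorem enorm3_pos {v : Fin 3 → ℝ} (hv : v ≠ 0) : 0 < enorm3 v := by
  obtain ⟨i, hi⟩ := Function.ne_iff.1 hv
  exact Real.sqrt_pos.2 <| Finset.sum_pos' (fun j _ => sq_nonneg (v j))
    ⟨i, Finset.mem_univ i, sq_pos_of_ne_zero hi⟩

theorem cross_unitNormal_eq_zero_iff {φ : (Fin 3 → ℝ) → ℝ} {x : Fin 3 → ℝ} (hg : grad3 φ x ≠ 0)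
    (v : Fin 3 → ℝ) : v ⨯₃ unitNormal φ x = 0 ↔ v ⨯₃ grad3 φ x = 0 := by
  rw [unitNormal, map_smul, smul_eq_zero, or_iff_right (inv_ne_zero (enorm3_pos hg).ne')]

theorem curl3_sub {u v : (Fin 3 → ℝ) → Fin 3 → ℝ} {x : Fin 3 → ℝ}
    (hu : DifferentiableAt ℝ u x) (hv : DifferentiableAt ℝ v x) :
    curl3 (u - v) x = curl3 u x - curl3 v x := by
  have hpderiv (j : Fin 3) : pderiv3 (u - v) j x = pderiv3 u j x - pderiv3 v j x := by
    rw [pderiv3, fderiv_sub hu hv]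
    rfl
  simp only [curl3, hpderiv, Pi.sub_apply, cons_sub_cons, empty_sub_empty, sub_sub_sub_comm]

theorem HasDerivAt.dotProduct_const {ι : Type*} [Fintype ι] {f : ℝ → ι → ℝ} {f' : ι → ℝ}
    {t : ℝ} (hf : HasDerivAt f f' t) (v : ι → ℝ) :
    HasDerivAt (fun s => f s ⬝ᵥ v) (f' ⬝ᵥ v) t :=
  HasDerivAt.fun_sum fun i _ => (hasDerivAt_pi.1 hf i).mul_const (v i)

theorem stmt18_general (t₀ T : ℝ)
    (φ : (Fin 3 → ℝ) → ℝ) (hφ : ContDiff ℝ 2 φ)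
    (hreg : ∀ x, φ x = 0 → grad3 φ x ≠ 0)
    (Ep Em Bp Bm : ℝ → (Fin 3 → ℝ) → (Fin 3 → ℝ))
    (hE : ∀ t ∈ Set.Icc t₀ T, ContDiff ℝ 1 (Ep t) ∧ ContDiff ℝ 1 (Em t))
    (hBp : ∀ t ∈ Set.Icc t₀ T, ∀ x, HasDerivAt (fun s => Bp s x) (-(curl3 (Ep t) x)) t)
    (hBm : ∀ t ∈ Set.Icc t₀ T, ∀ x, HasDerivAt (fun s => Bm s x) (-(curl3 (Em t) x)) t)
    (hjump : ∀ t ∈ Set.Icc t₀ T, ∀ x, φ x = 0 →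
      crossProduct (Ep t x - Em t x) (unitNormal φ x) = 0)
    (hinit : ∀ x, φ x = 0 → (Bp t₀ x - Bm t₀ x) ⬝ᵥ unitNormal φ x = 0) :
    ∀ t ∈ Set.Icc t₀ T, ∀ x, φ x = 0 → (Bp t x - Bm t x) ⬝ᵥ unitNormal φ x = 0 := by
  intro t ht x hx
  have hcurl (s : ℝ) (hs : s ∈ Set.Icc t₀ T) :
      (curl3 (Ep s) x - curl3 (Em s) x) ⬝ᵥ unitNormal φ x = 0 := by
    obtain ⟨hEp, hEm⟩ := hE s hs
    have hcross (y : Fin 3 → ℝ) (hy : φ y = 0) : (Ep s - Em s) y ⨯₃ grad3 φ y = 0 :=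
      (cross_unitNormal_eq_zero_iff (hreg y hy) _).1 (hjump s hs y hy)
    rw [← curl3_sub (hEp.differentiable one_ne_zero x) (hEm.differentiable one_ne_zero x),
      unitNormal, dotProduct_smul, curl3_dot_grad3_eq_zero_of_cross_eq_zero (u := Ep s - Em s)
        hφ.contDiffAt (hEp.sub hEm).contDiffAt hx (hreg x hx) hcross, smul_zero]
  have hderiv (s : ℝ) (hs : s ∈ Set.Icc t₀ T) :
      HasDerivAt (fun r => (Bp r x - Bm r x) ⬝ᵥ unitNormal φ x) 0 s := by
    have h := ((hBp s hs x).sub (hBm s hs x)).dotProduct_const (unitNormal φ x)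
    exact h.congr_deriv (by rw [neg_sub_neg, ← neg_sub, neg_dotProduct, hcurl s hs, neg_zero])
  have hconst := constant_of_has_deriv_right_zero
    (fun s hs => (hderiv s hs).continuousAt.continuousWithinAt)
    (fun s hs => (hderiv s (Set.Ico_subset_Icc_self hs)).hasDerivWithinAt)
  rw [hconst t ht, hinit x hx]

/-- Conservation of the magnetic interface condition: if the two-sided fields satisfy
`∂_t B_± = -curl E_±`, the tangential jump `[E × ν] = 0` holds on the interface
`Σ = {φ = 0}` (a C² surface with non-vanishing normal), and the normal jump
`[B·ν]` vanishes at `t₀`, then `[B·ν] = 0` on `Σ` for all `t ∈ [t₀,T]`. -/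
theorem stmt18 (t₀ T : ℝ) (hT : t₀ < T)
    (φ : (Fin 3 → ℝ) → ℝ) (hφ : ContDiff ℝ 2 φ)
    (hreg : ∀ x, φ x = 0 → grad3 φ x ≠ 0)
    (Ep Em Bp Bm : ℝ → (Fin 3 → ℝ) → (Fin 3 → ℝ))
    (hE : ∀ t ∈ Set.Icc t₀ T, ContDiff ℝ 1 (Ep t) ∧ ContDiff ℝ 1 (Em t))
    (hBp : ∀ t ∈ Set.Icc t₀ T, ∀ x, HasDerivAt (fun s => Bp s x) (-(curl3 (Ep t) x)) t)
    (hBm : ∀ t ∈ Set.Icc t₀ T, ∀ x, HasDerivAt (fun s => Bm s x) (-(curl3 (Em t) x)) t)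
    (hjump : ∀ t ∈ Set.Icc t₀ T, ∀ x, φ x = 0 →
      crossProduct (Ep t x - Em t x) (unitNormal φ x) = 0)
    (hinit : ∀ x, φ x = 0 → (Bp t₀ x - Bm t₀ x) ⬝ᵥ unitNormal φ x = 0) :
    ∀ t ∈ Set.Icc t₀ T, ∀ x, φ x = 0 → (Bp t x - Bm t x) ⬝ᵥ unitNormal φ x = 0 :=
  stmt18_general t₀ T φ hφ hreg Ep Em Bp Bm hE hBp hBm hjump hinit
end
end

section
/- Under the hypotheses of the preceding interface setting, suppose additionally ∂_t D_± = curl H_± - J_± on G_± with J ∈ L²(J, ℋ(div,G)), the tangential jump satisfies [H × ν] = J_Σ on J × Σ with J_Σ ∈ L²(J, H(div,Σ)), and define ρ_Σ(t) = ρ_{Σ,0} - ∫_{t₀}^t (div_Σ J_Σ(s) - [J·ν](s)) ds. If [D·ν](t₀) = -ρ_{Σ,0} on Σ, then [D·ν](t) = -ρ_Σ(t) on Σ for all t ∈ J. -/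
/-!
Fix `x ∈ Σ`. In time, `[D·ν]` has derivative `[curl H]·ν - [J·ν]`, so by the fundamental
theorem of calculus it suffices to show `div_Σ J_Σ = [curl H]·ν` at `x`. The surface divergence
at `x` only sees a field on `Σ`: a field vanishing on `Σ` has vanishing derivative in the
directions tangent to `Σ` (follow a curve in `Σ` given by the implicit function theorem).
So `J_Σ` may be replaced by `[H] × ν`, and `div_Σ (G × ν) = curl G · ν` is a pointwise identity
using only that `ν = ∇φ / |∇φ|` has unit length (so `ν · ∂_j ν = 0`) and is a scalar multiple
of a gradient (so the antisymmetric part of `Dν` has the form `ν ∧ v`).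
-/

open Matrix intervalIntegral

noncomputable section

/-- The Jacobian entry `∂_j F_i` of a vector field `F : ℝ³ → ℝ³`. -/
def jac3 (F : (Fin 3 → ℝ) → (Fin 3 → ℝ)) (x : Fin 3 → ℝ) (i j : Fin 3) : ℝ :=
  pderiv3 F j x i

/-- The surface divergence on `Σ = {φ = 0}` of a (tangential) field `F`:
`div_Σ F = div F - ν·(DF ν)`, which on `Σ` depends only on `F|_Σ`. -/
def divSurf (φ : (Fin 3 → ℝ) → ℝ) (F : (Fin 3 → ℝ) → (Fin 3 → ℝ)) (x : Fin 3 → ℝ) : ℝ :=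
  (∑ i, jac3 F x i i) -
    ∑ i, ∑ j, unitNormal φ x i * jac3 F x i j * unitNormal φ x j

open Filter Topology

section LevelSet

variable {E F G : Type*} [NormedAddCommGroup E] [NormedSpace ℝ E] [CompleteSpace E]
  [NormedAddCommGroup F] [NormedSpace ℝ F] [FiniteDimensional ℝ F]
  [NormedAddCommGroup G] [NormedSpace ℝ G]
  {f : E → F} {f' : E →L[ℝ] F} {a w : E}

theorem HasStrictFDerivAt.exists_curve_levelSet (hf : HasStrictFDerivAt f f' a)
    (hf' : f'.range = ⊤) (hw : f' w = 0) :
    ∃ γ : ℝ → E, γ 0 = a ∧ HasDerivAt γ w 0 ∧ ∀ᶠ t in 𝓝 0, f (γ t) = f a := by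
  let w' : f'.ker := ⟨w, hw⟩
  have hline : HasDerivAt (fun t : ℝ => t • w') w' 0 := by
    simpa using (hasDerivAt_id (0 : ℝ)).smul_const w'
  refine ⟨fun t => hf.implicitFunction f f' hf' (f a) (t • w'), by simp, ?_, ?_⟩
  · have himpl : HasFDerivAt (hf.implicitFunction f f' hf' (f a)) f'.ker.subtypeL
        ((0 : ℝ) • w') := by
      rw [zero_smul]; exact (hf.to_implicitFunction hf').hasFDerivAt
    exact himpl.comp_hasDerivAt 0 hline
  · have hlim : Tendsto (fun t : ℝ => (f a, t • w')) (𝓝 0) (𝓝 (f a, 0)) := by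
      simpa using tendsto_const_nhds.prodMk_nhds (hline.continuousAt.tendsto)
    exact hlim.eventually (hf.map_implicitFunction_eq hf')

theorem HasStrictFDerivAt.fderiv_apply_eq_zero_of_levelSet (hf : HasStrictFDerivAt f f' a)
    (hf' : f'.range = ⊤) (hw : f' w = 0) {h : E → G} (hh : DifferentiableAt ℝ h a)
    (hconst : ∀ y, f y = f a → h y = h a) : fderiv ℝ h a w = 0 := by
  obtain ⟨γ, hγ0, hγ, hlevel⟩ := hf.exists_curve_levelSet hf' hw
  subst hγ0
  have hcomp : HasDerivAt (h ∘ γ) (fderiv ℝ h (γ 0) w) 0 := hh.hasFDerivAt.comp_hasDerivAt 0 hγ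
  have hconst' : HasDerivAt (h ∘ γ) 0 0 :=
    (hasDerivAt_const 0 (h (γ 0))).congr_of_eventuallyEq
      (hlevel.mono fun t ht => hconst _ ht)
  exact hcomp.unique hconst'

end LevelSet

def crossProductL : (Fin 3 → ℝ) →L[ℝ] (Fin 3 → ℝ) →L[ℝ] Fin 3 → ℝ :=
  LinearMap.toContinuousLinearMap (LinearMap.toContinuousLinearMap.toLinearMap ∘ₗ crossProduct)

def dotProductL (ι : Type*) [Fintype ι] : (ι → ℝ) →L[ℝ] (ι → ℝ) →L[ℝ] ℝ :=
  LinearMap.toContinuousLinearMap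
    (LinearMap.toContinuousLinearMap.toLinearMap ∘ₗ dotProductBilin ℝ ℝ)

@[simp] lemma crossProductL_apply (u v : Fin 3 → ℝ) : crossProductL u v = u ⨯₃ v := rfl

@[simp] lemma dotProductL_apply {ι : Type*} [Fintype ι] (u v : ι → ℝ) :
    dotProductL ι u v = u ⬝ᵥ v := rfl

section VectorCalculus

variable {E : Type*} [NormedAddCommGroup E] [NormedSpace ℝ E] {x : E}

lemma dotProduct_fderiv_eq_zero_of_eventually {ι : Type*} [Fintype ι] {f : E → ι → ℝ} {c : ℝ}
    (hf : DifferentiableAt ℝ f x) (hc : ∀ᶠ y in 𝓝 x, f y ⬝ᵥ f y = c) (w : E) :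
    f x ⬝ᵥ fderiv ℝ f x w = 0 := by
  have hprod := (dotProductL ι).hasFDerivAt_of_bilinear hf.hasFDerivAt hf.hasFDerivAt
  have hconst : HasFDerivAt (fun y => dotProductL ι (f y) (f y)) (0 : E →L[ℝ] ℝ) x :=
    (hasFDerivAt_const c x).congr_of_eventuallyEq hc
  have h := congrArg (fun L : E →L[ℝ] ℝ => L w) (hprod.unique hconst)
  simpa [dotProduct_comm (fderiv ℝ f x w)] using h

end VectorCalculus

section Jacobian

variable {x : Fin 3 → ℝ}

lemma DifferentiableAt.cross {G H : (Fin 3 → ℝ) → Fin 3 → ℝ} (hG : DifferentiableAt ℝ G x)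
    (hH : DifferentiableAt ℝ H x) : DifferentiableAt ℝ (fun y => G y ⨯₃ H y) x :=
  (crossProductL.hasFDerivAt_of_bilinear hG.hasFDerivAt hH.hasFDerivAt).differentiableAt

lemma pderiv3_cross {G H : (Fin 3 → ℝ) → Fin 3 → ℝ} (hG : DifferentiableAt ℝ G x)
    (hH : DifferentiableAt ℝ H x) (j : Fin 3) :
    pderiv3 (fun y => G y ⨯₃ H y) j x = G x ⨯₃ pderiv3 H j x + pderiv3 G j x ⨯₃ H x := by
  have h := crossProductL.hasFDerivAt_of_bilinear hG.hasFDerivAt hH.hasFDerivAt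
  simp only [crossProductL_apply] at h
  simp [pderiv3, h.fderiv]

lemma jac3_smul {g : (Fin 3 → ℝ) → ℝ} {P : (Fin 3 → ℝ) → Fin 3 → ℝ}
    (hg : DifferentiableAt ℝ g x) (hP : DifferentiableAt ℝ P x) (i j : Fin 3) :
    jac3 (fun y => g y • P y) x i j
      = g x * jac3 P x i j + fderiv ℝ g x (Pi.single j 1) * P x i := by
  simp [jac3, pderiv3, fderiv_fun_smul hg hP]

lemma curl3_sub_s19 {G H : (Fin 3 → ℝ) → Fin 3 → ℝ} (hG : DifferentiableAt ℝ G x)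
    (hH : DifferentiableAt ℝ H x) :
    curl3 (G - H) x = curl3 G x - curl3 H x := by
  ext i
  fin_cases i <;> simp [curl3, pderiv3, fderiv_sub hG hH] <;> ring

end Jacobian

section UnitNormal

lemma dotProduct_self_eq_enorm3_sq (v : Fin 3 → ℝ) : v ⬝ᵥ v = enorm3 v ^ 2 := by
  rw [enorm3, Real.sq_sqrt (Finset.sum_nonneg fun i _ => sq_nonneg (v i))]
  simp [dotProduct, sq]

lemma enorm3_ne_zero {v : Fin 3 → ℝ} (hv : v ≠ 0) : enorm3 v ≠ 0 := by
  intro h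
  rw [← pow_eq_zero_iff two_ne_zero, ← dotProduct_self_eq_enorm3_sq,
    dotProduct_self_eq_zero] at h
  exact hv h

lemma differentiableAt_enorm3 {v : Fin 3 → ℝ} (hv : v ≠ 0) : DifferentiableAt ℝ enorm3 v := by
  have hsum : ∑ i, v i ^ 2 ≠ 0 := by
    simpa [dotProduct, sq] using (dotProduct_self_eq_zero (v := v)).not.2 hv
  exact (DifferentiableAt.fun_sum fun i _ => (differentiableAt_apply i v).pow 2).sqrt hsum

variable {φ : (Fin 3 → ℝ) → ℝ} {x : Fin 3 → ℝ}

lemma fderiv_apply_eq_grad3_dotProduct (w : Fin 3 → ℝ) :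
    fderiv ℝ φ x w = grad3 φ x ⬝ᵥ w := by
  rw [← (fderiv ℝ φ x).coe_coe, LinearMap.pi_apply_eq_sum_univ, dotProduct]
  refine Finset.sum_congr rfl fun i _ => ?_
  have hsingle : (fun j => if i = j then (1 : ℝ) else 0) = Pi.single i 1 := by
    ext j; simp [Pi.single_apply, eq_comm]
  simp [grad3, hsingle, mul_comm]

lemma grad3_eq_smul_unitNormal (hg : grad3 φ x ≠ 0) :
    grad3 φ x = enorm3 (grad3 φ x) • unitNormal φ x := by
  rw [unitNormal, smul_smul, mul_inv_cancel₀ (enorm3_ne_zero hg), one_smul]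

lemma unitNormal_dotProduct_self (hg : grad3 φ x ≠ 0) :
    unitNormal φ x ⬝ᵥ unitNormal φ x = 1 := by
  rw [unitNormal, smul_dotProduct, dotProduct_smul, dotProduct_self_eq_enorm3_sq, smul_eq_mul,
    smul_eq_mul]
  field_simp [enorm3_ne_zero hg]

lemma contDiff_grad3 (hφ : ContDiff ℝ 2 φ) : ContDiff ℝ 1 (grad3 φ) :=
  contDiff_pi.2 fun _ => (hφ.fderiv_right (by norm_num)).clm_apply contDiff_const

lemma jac3_grad3_symm (hφ : ContDiff ℝ 2 φ) (i j : Fin 3) :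
    jac3 (grad3 φ) x i j = jac3 (grad3 φ) x j i := by
  have hφ' : Differentiable ℝ (fderiv ℝ φ) :=
    (hφ.fderiv_right (m := 1) le_rfl).differentiable one_ne_zero
  have hentry : ∀ i j, jac3 (grad3 φ) x i j
      = fderiv ℝ (fderiv ℝ φ) x (Pi.single j 1) (Pi.single i 1) := by
    intro i j
    change fderiv ℝ (fun y k => fderiv ℝ φ y (Pi.single k 1)) x (Pi.single j 1) i = _
    rw [fderiv_pi fun k => (hφ' x).clm_apply (differentiableAt_const _)]
    simp [fderiv_clm_apply (hφ' x) (differentiableAt_const _)]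
  rw [hentry, hentry, (hφ.contDiffAt.isSymmSndFDerivAt (by simp))]

lemma differentiableAt_unitNormal (hφ : ContDiff ℝ 2 φ) (hg : grad3 φ x ≠ 0) :
    DifferentiableAt ℝ (unitNormal φ) x := by
  have hgrad : DifferentiableAt ℝ (grad3 φ) x := (contDiff_grad3 hφ).differentiable one_ne_zero x
  exact (((differentiableAt_enorm3 hg).comp x hgrad).inv (enorm3_ne_zero hg)).smul hgrad

lemma unitNormal_dotProduct_pderiv3 (hφ : ContDiff ℝ 2 φ) (hg : grad3 φ x ≠ 0) (j : Fin 3) :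
    unitNormal φ x ⬝ᵥ pderiv3 (unitNormal φ) j x = 0 := by
  have hreg : ∀ᶠ y in 𝓝 x, grad3 φ y ≠ 0 :=
    (contDiff_grad3 hφ).continuous.continuousAt.eventually_ne hg
  exact dotProduct_fderiv_eq_zero_of_eventually (differentiableAt_unitNormal hφ hg)
    (hreg.mono fun y => unitNormal_dotProduct_self) _

lemma exists_jac3_unitNormal_antisymm (hφ : ContDiff ℝ 2 φ) (hg : grad3 φ x ≠ 0) :
    ∃ v : Fin 3 → ℝ, ∀ i j, jac3 (unitNormal φ) x i j - jac3 (unitNormal φ) x j i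
      = unitNormal φ x i * v j - unitNormal φ x j * v i := by
  set c := enorm3 (grad3 φ x)
  set g : (Fin 3 → ℝ) → ℝ := fun y => (enorm3 (grad3 φ y))⁻¹
  have hgrad : DifferentiableAt ℝ (grad3 φ) x := (contDiff_grad3 hφ).differentiable one_ne_zero x
  have hgd : DifferentiableAt ℝ g x :=
    ((differentiableAt_enorm3 hg).comp x hgrad).inv (enorm3_ne_zero hg)
  refine ⟨fun j => c * fderiv ℝ g x (Pi.single j 1), fun i j => ?_⟩
  have hjac : ∀ i j, jac3 (unitNormal φ) x i j
      = g x * jac3 (grad3 φ) x i j + fderiv ℝ g x (Pi.single j 1) * grad3 φ x i :=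
    jac3_smul hgd hgrad
  have hp : ∀ k, grad3 φ x k = c * unitNormal φ x k := fun k =>
    congrFun (grad3_eq_smul_unitNormal hg) k
  rw [hjac, hjac, jac3_grad3_symm hφ i j, hp, hp]
  ring

end UnitNormal

section SurfaceDivergence

variable {φ : (Fin 3 → ℝ) → ℝ} {x : Fin 3 → ℝ}

lemma fderiv_apply_eq_zero_of_vanishing_on_levelSet (hφ : ContDiff ℝ 2 φ) (hx : φ x = 0)
    (hg : grad3 φ x ≠ 0) {h : (Fin 3 → ℝ) → Fin 3 → ℝ} (hh : DifferentiableAt ℝ h x)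
    (h0 : ∀ y, φ y = 0 → h y = 0) {w : Fin 3 → ℝ} (hw : grad3 φ x ⬝ᵥ w = 0) :
    fderiv ℝ h x w = 0 := by
  have hf : HasStrictFDerivAt φ (fderiv ℝ φ x) x := hφ.contDiffAt.hasStrictFDerivAt (by norm_num)
  have hne : fderiv ℝ φ x ≠ 0 := fun h => hg (funext fun i => by simp [grad3, h])
  have hsurj : (fderiv ℝ φ x).range = ⊤ :=
    Module.Dual.range_eq_top_of_ne_zero (f := (fderiv ℝ φ x : (Fin 3 → ℝ) →ₗ[ℝ] ℝ))
      (by exact_mod_cast hne)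
  exact hf.fderiv_apply_eq_zero_of_levelSet hsurj (by rwa [fderiv_apply_eq_grad3_dotProduct]) hh
    fun y hy => by rw [h0 y (hy.trans hx), h0 x hx]

lemma divSurf_congr (hφ : ContDiff ℝ 2 φ) (hx : φ x = 0) (hg : grad3 φ x ≠ 0)
    {F₁ F₂ : (Fin 3 → ℝ) → Fin 3 → ℝ} (h₁ : DifferentiableAt ℝ F₁ x)
    (h₂ : DifferentiableAt ℝ F₂ x) (heq : ∀ y, φ y = 0 → F₁ y = F₂ y) :
    divSurf φ F₁ x = divSurf φ F₂ x := by
  set ν := unitNormal φ x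
  have hn := unitNormal_dotProduct_self hg
  set m := fderiv ℝ (F₁ - F₂) x ν
  have hjac : ∀ i j, jac3 F₁ x i j = jac3 F₂ x i j + m i * ν j := by
    intro i j
    have htan : grad3 φ x ⬝ᵥ (Pi.single j 1 - ν j • ν) = 0 := by
      rw [grad3_eq_smul_unitNormal hg, smul_dotProduct, dotProduct_sub, dotProduct_smul, hn]
      simp [ν]
    have hzero := fderiv_apply_eq_zero_of_vanishing_on_levelSet hφ hx hg (h₁.sub h₂)
      (fun y hy => sub_eq_zero.2 (heq y hy)) htan
    rw [map_sub, map_smul, sub_eq_zero] at hzero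
    have hi := congrFun hzero i
    simp only [jac3, pderiv3, m]
    rw [fderiv_sub h₁ h₂] at hi ⊢
    simp only [_root_.sub_apply, Pi.sub_apply, Pi.smul_apply, smul_eq_mul] at hi ⊢
    linarith
  simp only [divSurf, hjac, Fin.sum_univ_three]
  simp only [dotProduct, Fin.sum_univ_three] at hn
  linear_combination (-(ν 0 * m 0 + ν 1 * m 1 + ν 2 * m 2)) * hn

lemma divSurf_cross_unitNormal (hφ : ContDiff ℝ 2 φ) (hg : grad3 φ x ≠ 0)
    {G : (Fin 3 → ℝ) → Fin 3 → ℝ} (hG : DifferentiableAt ℝ G x) :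
    divSurf φ (fun y => G y ⨯₃ unitNormal φ y) x = curl3 G x ⬝ᵥ unitNormal φ x := by
  obtain ⟨v, hv⟩ := exists_jac3_unitNormal_antisymm hφ hg
  have hunit := unitNormal_dotProduct_pderiv3 hφ hg
  have hn := unitNormal_dotProduct_self hg
  have hjac : ∀ i j, jac3 (fun y => G y ⨯₃ unitNormal φ y) x i j
      = (G x ⨯₃ pderiv3 (unitNormal φ) j x + pderiv3 G j x ⨯₃ unitNormal φ x) i := fun i j => by
    rw [jac3, pderiv3_cross hG (differentiableAt_unitNormal hφ hg)]
  simp only [jac3] at hv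
  simp only [dotProduct, Fin.sum_univ_three] at hn hunit
  simp only [divSurf, hjac, Fin.sum_univ_three]
  simp only [curl3, dotProduct, Fin.sum_univ_three, cross_apply, Pi.add_apply,
    Matrix.cons_val_zero, Matrix.cons_val_one, Matrix.cons_val_two, Matrix.head_cons,
    Matrix.tail_cons]
  set n := unitNormal φ x
  set g := G x
  -- with `a_j = ∂_j ν`: antisymmetry gives `curl ν = v × ν`, and with `ν · a_j = 0` it gives
  -- `∂_ν ν = (ν·v) ν - v`, so that `div_Σ (G × ν) - curl G · ν = -G · (curl ν + ∂_ν ν × ν) = 0`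
  linear_combination
    (g 0 * (v 1 * n 2 - v 2 * n 1) + g 1 * (v 2 * n 0 - v 0 * n 2)
      + g 2 * (v 0 * n 1 - v 1 * n 0)) * hn
    - (n 1 * g 2 - n 2 * g 1) * hunit 0 - (n 2 * g 0 - n 0 * g 2) * hunit 1
    - (n 0 * g 1 - n 1 * g 0) * hunit 2
    + ((n 0 * n 0 + n 1 * n 1 + n 2 * n 2 - 1) * g 0
      - n 0 * (g 0 * n 0 + g 1 * n 1 + g 2 * n 2)) * hv 2 1
    + ((n 0 * n 0 + n 1 * n 1 + n 2 * n 2 - 1) * g 1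
      - n 1 * (g 0 * n 0 + g 1 * n 1 + g 2 * n 2)) * hv 0 2
    + ((n 0 * n 0 + n 1 * n 1 + n 2 * n 2 - 1) * g 2
      - n 2 * (g 0 * n 0 + g 1 * n 1 + g 2 * n 2)) * hv 1 0

end SurfaceDivergence

theorem stmt19_general (t₀ T : ℝ)
    (φ : (Fin 3 → ℝ) → ℝ) (hφ : ContDiff ℝ 2 φ)
    (hreg : ∀ x, φ x = 0 → grad3 φ x ≠ 0)
    (Hp Hm Dp Dm Jp Jm Jsig : ℝ → (Fin 3 → ℝ) → (Fin 3 → ℝ))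
    (ρ0 : (Fin 3 → ℝ) → ℝ)
    (hH : ∀ t ∈ Set.Icc t₀ T, ContDiff ℝ 1 (Hp t) ∧ ContDiff ℝ 1 (Hm t))
    (hJsigreg : ∀ t ∈ Set.Icc t₀ T, ContDiff ℝ 1 (Jsig t))
    (hDp : ∀ t ∈ Set.Icc t₀ T, ∀ x,
      HasDerivAt (fun s => Dp s x) (curl3 (Hp t) x - Jp t x) t)
    (hDm : ∀ t ∈ Set.Icc t₀ T, ∀ x,
      HasDerivAt (fun s => Dm s x) (curl3 (Hm t) x - Jm t x) t)
    (hJsig : ∀ t ∈ Set.Icc t₀ T, ∀ x, φ x = 0 →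
      Jsig t x = crossProduct (Hp t x - Hm t x) (unitNormal φ x))
    (hcont : ∀ x, φ x = 0 → ContinuousOn
      (fun s => divSurf φ (Jsig s) x - (Jp s x - Jm s x) ⬝ᵥ unitNormal φ x) (Set.Icc t₀ T))
    (hinit : ∀ x, φ x = 0 → (Dp t₀ x - Dm t₀ x) ⬝ᵥ unitNormal φ x = -(ρ0 x)) :
    ∀ t ∈ Set.Icc t₀ T, ∀ x, φ x = 0 →
      (Dp t x - Dm t x) ⬝ᵥ unitNormal φ x
        = -(ρ0 x - ∫ s in t₀..t,
            (divSurf φ (Jsig s) x - (Jp s x - Jm s x) ⬝ᵥ unitNormal φ x)) := by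
  intro t ht x hx
  have hinterface : ∀ s ∈ Set.Icc t₀ T,
      divSurf φ (Jsig s) x = (curl3 (Hp s) x - curl3 (Hm s) x) ⬝ᵥ unitNormal φ x := by
    intro s hs
    have hHp := (hH s hs).1.differentiable one_ne_zero x
    have hHm := (hH s hs).2.differentiable one_ne_zero x
    rw [divSurf_congr hφ hx (hreg x hx) ((hJsigreg s hs).differentiable one_ne_zero x)
        ((hHp.sub hHm).cross (differentiableAt_unitNormal hφ (hreg x hx))) (hJsig s hs),
      divSurf_cross_unitNormal hφ (hreg x hx) (hHp.sub hHm), curl3_sub_s19 hHp hHm]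
  have hderiv : ∀ s ∈ Set.Icc t₀ T, HasDerivAt (fun τ => (Dp τ x - Dm τ x) ⬝ᵥ unitNormal φ x)
      (divSurf φ (Jsig s) x - (Jp s x - Jm s x) ⬝ᵥ unitNormal φ x) s := by
    intro s hs
    refine (((dotProductL (Fin 3)).flip (unitNormal φ x)).hasFDerivAt.comp_hasDerivAt s
      ((hDp s hs x).sub (hDm s hs x))).congr_deriv ?_
    rw [hinterface s hs]
    simp only [ContinuousLinearMap.flip_apply, dotProductL_apply, sub_dotProduct]
    ring
  have hsub : Set.uIcc t₀ t ⊆ Set.Icc t₀ T := by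
    rw [Set.uIcc_of_le ht.1]
    exact Set.Icc_subset_Icc_right ht.2
  rw [integral_eq_sub_of_hasDerivAt (fun s hs => hderiv s (hsub hs))
    ((hcont x hx).mono hsub).intervalIntegrable, hinit x hx]
  ring

/-- Conservation of the electric interface condition: assume `∂_t D_± = curl H_± - J_±`,
the tangential jump satisfies `[H × ν] = J_Σ` on `Σ = {φ = 0}`, and define
`ρ_Σ(t) = ρ_{Σ,0} - ∫_{t₀}^t (div_Σ J_Σ(s) - [J·ν](s)) ds`.  If `[D·ν](t₀) = -ρ_{Σ,0}`
on `Σ`, then `[D·ν](t) = -ρ_Σ(t)` on `Σ` for all `t ∈ [t₀,T]`. -/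
theorem stmt19 (t₀ T : ℝ) (hT : t₀ < T)
    (φ : (Fin 3 → ℝ) → ℝ) (hφ : ContDiff ℝ 2 φ)
    (hreg : ∀ x, φ x = 0 → grad3 φ x ≠ 0)
    (Hp Hm Dp Dm Jp Jm Jsig : ℝ → (Fin 3 → ℝ) → (Fin 3 → ℝ))
    (ρ0 : (Fin 3 → ℝ) → ℝ)
    (hH : ∀ t ∈ Set.Icc t₀ T, ContDiff ℝ 1 (Hp t) ∧ ContDiff ℝ 1 (Hm t))
    (hJsigreg : ∀ t ∈ Set.Icc t₀ T, ContDiff ℝ 1 (Jsig t))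
    (hDp : ∀ t ∈ Set.Icc t₀ T, ∀ x,
      HasDerivAt (fun s => Dp s x) (curl3 (Hp t) x - Jp t x) t)
    (hDm : ∀ t ∈ Set.Icc t₀ T, ∀ x,
      HasDerivAt (fun s => Dm s x) (curl3 (Hm t) x - Jm t x) t)
    (hJsig : ∀ t ∈ Set.Icc t₀ T, ∀ x, φ x = 0 →
      Jsig t x = crossProduct (Hp t x - Hm t x) (unitNormal φ x))
    (hcont : ∀ x, φ x = 0 → ContinuousOn
      (fun s => divSurf φ (Jsig s) x - (Jp s x - Jm s x) ⬝ᵥ unitNormal φ x) (Set.Icc t₀ T))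
    (hinit : ∀ x, φ x = 0 → (Dp t₀ x - Dm t₀ x) ⬝ᵥ unitNormal φ x = -(ρ0 x)) :
    ∀ t ∈ Set.Icc t₀ T, ∀ x, φ x = 0 →
      (Dp t x - Dm t x) ⬝ᵥ unitNormal φ x
        = -(ρ0 x - ∫ s in t₀..t,
            (divSurf φ (Jsig s) x - (Jp s x - Jm s x) ⬝ᵥ unitNormal φ x)) :=
  stmt19_general t₀ T φ hφ hreg Hp Hm Dp Dm Jp Jm Jsig ρ0 hH hJsigreg hDp hDm hJsig hcont hinit
end
end
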